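/- If the eigenvalues λ_i of the diagonal operator A satisfy |λ_i| ≤ C|i|^α for some constants C, α > 0, then the operator E_A[F₁,F₂] = Σ_i λ_i (:a¹_iF₁ · a²_iF₂: + :a¹_iF₂ · a²_iF₁:) is continuous from W·N_{∞−} × W·N_{∞−} into W·N_{∞−}: for all r, C' there exist r₁, C₁, K with ‖E_A[F₁,F₂]‖_{r,C'} ≤ K‖F₁‖_{r₁,C₁}‖F₂‖_{r₁,C₁}. -/

import Mathlib

open scoped ENNReal

/-- Index set for the Fock basis over `H ⊕ H*`: a basis label `i ∈ ℤ` and a Boolean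
selecting the factor `H` (`false`) or `H*` (`true`). -/
abbrev PairIdx := ℤ × Bool

noncomputable def hidaWeight {β : Type*} (C₁ r : ℝ) (I : Multiset (ℤ × β)) : ℝ :=
  (I.map (fun p => (C₁ * (p.1 : ℝ) ^ 2 + 1) ^ (r / 2))).prod

noncomputable def fockNormSq {β : Type*} (C₁ r C : ℝ) (b : Multiset (ℤ × β) → ℂ) : ℝ≥0∞ :=
  ∑' I : Multiset (ℤ × β), (‖b I‖₊ : ℝ≥0∞) ^ 2 *
    ENNReal.ofReal (hidaWeight C₁ r I) * ENNReal.ofReal C ^ Multiset.card I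

noncomputable def fockNorm {β : Type*} (C₁ r C : ℝ) (b : Multiset (ℤ × β) → ℂ) : ℝ≥0∞ :=
  fockNormSq C₁ r C b ^ (1 / 2 : ℝ)

def memHida {β : Type*} (C₁ : ℝ) (b : Multiset (ℤ × β) → ℂ) : Prop :=
  ∀ r C : ℝ, 0 < r → 0 < C → fockNormSq C₁ r C b < ⊤

/-- The annihilation operator `a_p` on coefficient families. -/
noncomputable def ann {β : Type*} [DecidableEq β] (p : ℤ × β)
    (b : Multiset (ℤ × β) → ℂ) (J : Multiset (ℤ × β)) : ℂ :=
  ((J.count p + 1 : ℕ) : ℂ) * b (p ::ₘ J)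

/-- The symmetric bidifferential operator
`E_A[F₁,F₂] = Σ_i λ_i (:a¹_iF₁ a²_iF₂: + :a¹_iF₂ a²_iF₁:)` on coefficients, where
`a¹_i = a_{(i,false)}` and `a²_i = a_{(i,true)}`. -/
noncomputable def EA (lam : ℤ → ℝ) (b₁ b₂ : Multiset PairIdx → ℂ)
    (I : Multiset PairIdx) : ℂ :=
  ∑' i : ℤ, (lam i : ℂ) *
    ((∑ J ∈ I.powerset.toFinset, ann (i, false) b₁ J * ann (i, true) b₂ (I - J)) +
     (∑ J ∈ I.powerset.toFinset, ann (i, false) b₂ J * ann (i, true) b₁ (I - J)))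

section EAaux
set_option maxHeartbeats 1000000


variable {β : Type*} [DecidableEq β]

lemma hidaWeight_cons (C₁ r : ℝ) (p : ℤ × β) (J : Multiset (ℤ × β)) :
    hidaWeight C₁ r (p ::ₘ J) = (C₁ * (p.1 : ℝ) ^ 2 + 1) ^ (r / 2) * hidaWeight C₁ r J := by
  simp [hidaWeight]

lemma hidaWeight_add (C₁ r : ℝ) (J K : Multiset (ℤ × β)) :
    hidaWeight C₁ r (J + K) = hidaWeight C₁ r J * hidaWeight C₁ r K := by
  simp [hidaWeight]

lemma one_le_base {C₁ : ℝ} (hC₁ : 0 < C₁) (i : ℤ) : 1 ≤ C₁ * (i : ℝ) ^ 2 + 1 := by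
  nlinarith [sq_nonneg ((i : ℝ))]

lemma one_le_rpow' {x y : ℝ} (hx : 1 ≤ x) (hy : 0 ≤ y) : 1 ≤ x ^ y := by
  calc (1:ℝ) = x ^ (0:ℝ) := (Real.rpow_zero x).symm
    _ ≤ x ^ y := Real.rpow_le_rpow_of_exponent_le hx hy

lemma one_le_hidaWeight {C₁ r : ℝ} (hC₁ : 0 < C₁) (hr : 0 ≤ r) (J : Multiset (ℤ × β)) :
    1 ≤ hidaWeight C₁ r J := by
  induction J using Multiset.induction_on with
  | empty => simp [hidaWeight]
  | cons p J ih =>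
    rw [hidaWeight_cons]
    have h1 : 1 ≤ (C₁ * (p.1 : ℝ) ^ 2 + 1) ^ (r / 2) :=
      one_le_rpow' (one_le_base hC₁ p.1) (by linarith)
    nlinarith

lemma hidaWeight_nonneg {C₁ r : ℝ} (hC₁ : 0 < C₁) (hr : 0 ≤ r) (J : Multiset (ℤ × β)) :
    0 ≤ hidaWeight C₁ r J := le_trans zero_le_one (one_le_hidaWeight hC₁ hr J)

lemma hidaWeight_mono {C₁ r r' : ℝ} (hC₁ : 0 < C₁) (hr : 0 ≤ r) (hrr' : r ≤ r')
    (J : Multiset (ℤ × β)) : hidaWeight C₁ r J ≤ hidaWeight C₁ r' J := by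
  induction J using Multiset.induction_on with
  | empty => simp [hidaWeight]
  | cons p J ih =>
    rw [hidaWeight_cons, hidaWeight_cons]
    have hb := one_le_base hC₁ p.1
    have h1 : (C₁ * (p.1 : ℝ) ^ 2 + 1) ^ (r / 2) ≤ (C₁ * (p.1 : ℝ) ^ 2 + 1) ^ (r' / 2) :=
      Real.rpow_le_rpow_of_exponent_le hb (by linarith)
    have h2 : (0:ℝ) ≤ (C₁ * (p.1 : ℝ) ^ 2 + 1) ^ (r / 2) :=
      le_trans zero_le_one (one_le_rpow' hb (by linarith))
    have h3 := hidaWeight_nonneg hC₁ hr J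
    have h4 := one_le_hidaWeight hC₁ (by linarith : (0:ℝ) ≤ r') J
    nlinarith

lemma weight_key {C₁ r α : ℝ} (hC₁ : 0 < C₁) (hr : 0 < r) (hα : 0 < α)
    (i : ℤ) (bl : β) (J : Multiset (ℤ × β)) :
    (C₁ * (i : ℝ) ^ 2 + 1) ^ (α + 1) * hidaWeight C₁ r J ≤
      hidaWeight C₁ (r + 2 * (α + 1)) ((i, bl) ::ₘ J) := by
  rw [hidaWeight_cons]
  have hb := one_le_base hC₁ i
  have h1 : (C₁ * (i : ℝ) ^ 2 + 1) ^ (α + 1) ≤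
      (C₁ * (i : ℝ) ^ 2 + 1) ^ ((r + 2 * (α + 1)) / 2) :=
    Real.rpow_le_rpow_of_exponent_le hb (by linarith)
  have h2 : hidaWeight C₁ r J ≤ hidaWeight C₁ (r + 2 * (α + 1)) J :=
    hidaWeight_mono hC₁ hr.le (by linarith) J
  have h3 : (0:ℝ) ≤ (C₁ * (i : ℝ) ^ 2 + 1) ^ (α + 1) :=
    le_trans zero_le_one (one_le_rpow' hb (by linarith))
  have h4 := hidaWeight_nonneg hC₁ hr.le J
  exact mul_le_mul h1 h2 h4 (le_trans h3 h1)

lemma cons_count_le {γ : Type*} [DecidableEq γ] {ι : Type*} (m : ι → γ)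
    (hm : Function.Injective m) (G : Multiset γ → ℝ≥0∞) :
    (∑' (i : ι), ∑' (J : Multiset γ), G (m i ::ₘ J)) ≤
      ∑' (J' : Multiset γ), (Multiset.card J' : ℝ≥0∞) * G J' := by
  have hcons : ∀ a : γ, Function.Injective (fun J : Multiset γ => a ::ₘ J) :=
    fun a J1 J2 h => (Multiset.cons_inj_right a).1 h
  calc (∑' (i : ι), ∑' (J : Multiset γ), G (m i ::ₘ J))
      = ∑' (i : ι), ∑' (J : Multiset γ),
          (fun J' => if m i ∈ J' then G J' else 0) (m i ::ₘ J) := by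
        refine tsum_congr fun i => tsum_congr fun J => ?_
        simp [Multiset.mem_cons_self]
    _ ≤ ∑' (i : ι), ∑' (J' : Multiset γ), (if m i ∈ J' then G J' else 0) :=
        Summable.tsum_le_tsum (fun i => ENNReal.tsum_comp_le_tsum_of_injective (hcons (m i)) _)
          ENNReal.summable ENNReal.summable
    _ = ∑' (J' : Multiset γ), ∑' (i : ι), (if m i ∈ J' then G J' else 0) := ENNReal.tsum_comm
    _ ≤ ∑' (J' : Multiset γ), (Multiset.card J' : ℝ≥0∞) * G J' := by
        refine Summable.tsum_le_tsum (fun J' => ?_) ENNReal.summable ENNReal.summable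
        classical
        set S : Finset ι := J'.toFinset.preimage m (hm.injOn) with hS
        have hzero : ∀ i ∉ S, (if m i ∈ J' then G J' else 0) = 0 := by
          intro i hi
          rw [if_neg]
          intro hmem
          exact hi (by simp [hS, Finset.mem_preimage, Multiset.mem_toFinset, hmem])
        rw [tsum_eq_sum hzero]
        have hcard : (S.card : ℝ≥0∞) ≤ (Multiset.card J' : ℝ≥0∞) := by
          have h1' : S.card = (S.image m).card := (Finset.card_image_of_injective S hm).symm
          have h2' : S.image m ⊆ J'.toFinset := by
            intro x hx
            obtain ⟨i, hi, rfl⟩ := Finset.mem_image.1 hx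
            simpa [Multiset.mem_toFinset] using (Finset.mem_preimage.1 hi)
          have := (Finset.card_le_card h2').trans (Multiset.toFinset_card_le J')
          exact_mod_cast h1' ▸ Nat.cast_le.2 this
        calc (∑ i ∈ S, if m i ∈ J' then G J' else 0) ≤ ∑ _i ∈ S, G J' := by
              refine Finset.sum_le_sum fun i _ => ?_
              split <;> simp
          _ = (S.card : ℝ≥0∞) * G J' := by rw [Finset.sum_const, nsmul_eq_mul]
          _ ≤ (Multiset.card J' : ℝ≥0∞) * G J' := mul_le_mul_left hcard _

lemma Phi_bound {Cw r ρ α : ℝ} (hCw : 0 < Cw) (hr : 0 < r) (hρ : 0 < ρ) (hα : 0 < α)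
    (bl : β) (b : Multiset (ℤ × β) → ℂ) :
    (∑' (i : ℤ), ∑' (J : Multiset (ℤ × β)),
      ENNReal.ofReal ((Cw * (i : ℝ) ^ 2 + 1) ^ (α + 1)) *
        ENNReal.ofReal (hidaWeight Cw r J) * ENNReal.ofReal ρ ^ Multiset.card J *
        ((‖ann (i, bl) b J‖₊ : ℝ≥0∞)) ^ 2)
    ≤ (ENNReal.ofReal ρ)⁻¹ * fockNormSq Cw (r + 2 * (α + 1)) (8 * ρ) b := by
  set r₁ := r + 2 * (α + 1) with hr₁
  set G : Multiset (ℤ × β) → ℝ≥0∞ := fun J' =>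
    ENNReal.ofReal (hidaWeight Cw r₁ J') * ENNReal.ofReal (4 * ρ) ^ Multiset.card J' *
      ((‖b J'‖₊ : ℝ≥0∞)) ^ 2 with hG
  have hρ0 : ENNReal.ofReal ρ ≠ 0 := by simp [ENNReal.ofReal_eq_zero, not_le, hρ]
  have hρt : ENNReal.ofReal ρ ≠ ⊤ := ENNReal.ofReal_ne_top
  have h4ρ : ENNReal.ofReal (4 * ρ) = 4 * ENNReal.ofReal ρ := by
    rw [ENNReal.ofReal_mul (by norm_num : (0:ℝ) ≤ 4), ENNReal.ofReal_ofNat]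
  have h8ρ : ENNReal.ofReal (8 * ρ) = 2 * ENNReal.ofReal (4 * ρ) := by
    rw [h4ρ, ENNReal.ofReal_mul (by norm_num : (0:ℝ) ≤ 8), ENNReal.ofReal_ofNat, ← mul_assoc]
    norm_num
  -- pointwise bound
  have key : ∀ (i : ℤ) (J : Multiset (ℤ × β)),
      ENNReal.ofReal ((Cw * (i : ℝ) ^ 2 + 1) ^ (α + 1)) *
        ENNReal.ofReal (hidaWeight Cw r J) * ENNReal.ofReal ρ ^ Multiset.card J *
        ((‖ann (i, bl) b J‖₊ : ℝ≥0∞)) ^ 2 ≤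
      (ENNReal.ofReal ρ)⁻¹ * G ((i, bl) ::ₘ J) := by
    intro i J
    set p : ℤ × β := (i, bl) with hp
    set n : ℕ := Multiset.card (p ::ₘ J) with hn
    have hcardn : Multiset.card J + 1 = n := by simp [hn]
    have hann : ((‖ann p b J‖₊ : ℝ≥0∞)) = ((J.count p + 1 : ℕ) : ℝ≥0∞) * ‖b (p ::ₘ J)‖₊ := by
      rw [ann, nnnorm_mul, ENNReal.coe_mul]
      congr 1
      norm_cast
    have hW : ENNReal.ofReal ((Cw * (i : ℝ) ^ 2 + 1) ^ (α + 1)) *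
        ENNReal.ofReal (hidaWeight Cw r J) ≤ ENNReal.ofReal (hidaWeight Cw r₁ (p ::ₘ J)) := by
      rw [← ENNReal.ofReal_mul (by positivity)]
      exact ENNReal.ofReal_le_ofReal (weight_key hCw hr hα i bl J)
    have h2 : (ENNReal.ofReal ρ)⁻¹ * ENNReal.ofReal ρ ^ n = ENNReal.ofReal ρ ^ Multiset.card J := by
      rw [← hcardn, pow_succ, mul_comm, mul_assoc, ENNReal.mul_inv_cancel hρ0 hρt, mul_one]
    have hcomb : ((J.count p + 1 : ℕ) : ℝ≥0∞) ^ 2 * ENNReal.ofReal ρ ^ Multiset.card J ≤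
        (ENNReal.ofReal ρ)⁻¹ * ENNReal.ofReal (4 * ρ) ^ n := by
      have hm_le : J.count p + 1 ≤ n := by
        rw [← hcardn]
        exact Nat.succ_le_succ (Multiset.count_le_card p J)
      have hn_le : (n : ℝ≥0∞) ≤ 2 ^ n := by
        exact_mod_cast Nat.cast_le.2 (Nat.lt_two_pow_self (n := n)).le
      have h1 : ((J.count p + 1 : ℕ) : ℝ≥0∞) ^ 2 ≤ ((2:ℝ≥0∞) ^ n) ^ 2 := by
        apply pow_le_pow_left₀ (by positivity)
        exact le_trans (by exact_mod_cast Nat.cast_le.2 hm_le) hn_le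
      have h4 : ((2:ℝ≥0∞) ^ n) ^ 2 = 4 ^ n := by
        rw [← pow_mul, mul_comm, pow_mul]
        norm_num
      calc ((J.count p + 1 : ℕ) : ℝ≥0∞) ^ 2 * ENNReal.ofReal ρ ^ Multiset.card J
          ≤ ((2:ℝ≥0∞) ^ n) ^ 2 * ENNReal.ofReal ρ ^ Multiset.card J := by gcongr
        _ = 4 ^ n * ((ENNReal.ofReal ρ)⁻¹ * ENNReal.ofReal ρ ^ n) := by rw [h4, h2]
        _ = (ENNReal.ofReal ρ)⁻¹ * (4 * ENNReal.ofReal ρ) ^ n := by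
            rw [mul_pow]; ring
        _ = (ENNReal.ofReal ρ)⁻¹ * ENNReal.ofReal (4 * ρ) ^ n := by rw [h4ρ]
    calc ENNReal.ofReal ((Cw * (i : ℝ) ^ 2 + 1) ^ (α + 1)) *
        ENNReal.ofReal (hidaWeight Cw r J) * ENNReal.ofReal ρ ^ Multiset.card J *
        ((‖ann p b J‖₊ : ℝ≥0∞)) ^ 2
        = (ENNReal.ofReal ((Cw * (i : ℝ) ^ 2 + 1) ^ (α + 1)) *
            ENNReal.ofReal (hidaWeight Cw r J)) *
          (((J.count p + 1 : ℕ) : ℝ≥0∞) ^ 2 * ENNReal.ofReal ρ ^ Multiset.card J) *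
          ((‖b (p ::ₘ J)‖₊ : ℝ≥0∞)) ^ 2 := by
          rw [hann, mul_pow]; ring
      _ ≤ ENNReal.ofReal (hidaWeight Cw r₁ (p ::ₘ J)) *
          ((ENNReal.ofReal ρ)⁻¹ * ENNReal.ofReal (4 * ρ) ^ n) *
          ((‖b (p ::ₘ J)‖₊ : ℝ≥0∞)) ^ 2 := by
          exact mul_le_mul_left (mul_le_mul' hW hcomb) _
      _ = (ENNReal.ofReal ρ)⁻¹ * G (p ::ₘ J) := by
          rw [hG]; simp only [← hn]; ring
  calc (∑' (i : ℤ), ∑' (J : Multiset (ℤ × β)),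
      ENNReal.ofReal ((Cw * (i : ℝ) ^ 2 + 1) ^ (α + 1)) *
        ENNReal.ofReal (hidaWeight Cw r J) * ENNReal.ofReal ρ ^ Multiset.card J *
        ((‖ann (i, bl) b J‖₊ : ℝ≥0∞)) ^ 2)
      ≤ ∑' (i : ℤ), ∑' (J : Multiset (ℤ × β)), (ENNReal.ofReal ρ)⁻¹ * G ((i, bl) ::ₘ J) :=
        Summable.tsum_le_tsum (fun i => Summable.tsum_le_tsum (fun J => key i J) ENNReal.summable ENNReal.summable)
          ENNReal.summable ENNReal.summable
    _ = (ENNReal.ofReal ρ)⁻¹ * ∑' (i : ℤ), ∑' (J : Multiset (ℤ × β)), G ((i, bl) ::ₘ J) := by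
        rw [← ENNReal.tsum_mul_left]
        exact tsum_congr fun i => ENNReal.tsum_mul_left
    _ ≤ (ENNReal.ofReal ρ)⁻¹ * ∑' (J' : Multiset (ℤ × β)), (Multiset.card J' : ℝ≥0∞) * G J' := by
        apply mul_le_mul_right
        apply cons_count_le (fun i : ℤ => ((i, bl) : ℤ × β))
        intro a a' h
        exact (Prod.ext_iff.1 h).1
    _ ≤ (ENNReal.ofReal ρ)⁻¹ * fockNormSq Cw r₁ (8 * ρ) b := by
        apply mul_le_mul_right
        rw [fockNormSq]
        refine Summable.tsum_le_tsum (fun J' => ?_) ENNReal.summable ENNReal.summable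
        have hc2 : (Multiset.card J' : ℝ≥0∞) ≤ 2 ^ Multiset.card J' := by
          exact_mod_cast Nat.cast_le.2 Nat.lt_two_pow_self.le
        calc (Multiset.card J' : ℝ≥0∞) * G J'
            ≤ 2 ^ Multiset.card J' * G J' := mul_le_mul_left hc2 _
          _ = ((‖b J'‖₊ : ℝ≥0∞)) ^ 2 * ENNReal.ofReal (hidaWeight Cw r₁ J') *
              (2 * ENNReal.ofReal (4 * ρ)) ^ Multiset.card J' := by
              rw [hG]; simp only [mul_pow]; ring
          _ = ((‖b J'‖₊ : ℝ≥0∞)) ^ 2 * ENNReal.ofReal (hidaWeight Cw r₁ J') *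
              ENNReal.ofReal (8 * ρ) ^ Multiset.card J' := by rw [h8ρ]

lemma amgm {a b c : ℝ≥0∞} (hc0 : c ≠ 0) (hct : c ≠ ⊤) : a * b ≤ c * a ^ 2 + c⁻¹ * b ^ 2 := by
  rcases le_or_gt a (c⁻¹ * b) with h | h
  · calc a * b ≤ (c⁻¹ * b) * b := by gcongr
      _ = c⁻¹ * b ^ 2 := by ring
      _ ≤ _ := le_add_self
  · have hb : b ≤ c * a := by
      have h2 : c * (c⁻¹ * b) ≤ c * a := mul_le_mul_right h.le c
      rwa [← mul_assoc, ENNReal.mul_inv_cancel hc0 hct, one_mul] at h2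
    calc a * b ≤ a * (c * a) := by gcongr
      _ = c * a ^ 2 := by ring
      _ ≤ _ := le_self_add

lemma finset_sq_le {γ : Type*} (s : Finset γ) (t : γ → ℝ≥0∞) :
    (∑ J ∈ s, t J) ^ 2 ≤ (2 * s.card) * ∑ J ∈ s, (t J) ^ 2 := by
  rw [sq, Finset.sum_mul_sum]
  calc ∑ J ∈ s, ∑ K ∈ s, t J * t K ≤ ∑ J ∈ s, ∑ K ∈ s, ((t J) ^ 2 + (t K) ^ 2) := by
        gcongr with J hJ K hK
        simpa using amgm (a := t J) (b := t K) one_ne_zero ENNReal.one_ne_top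
    _ = (2 * s.card) * ∑ J ∈ s, (t J) ^ 2 := by
        simp only [Finset.sum_add_distrib, Finset.sum_const, nsmul_eq_mul]
        rw [← Finset.mul_sum]
        ring

lemma pairing_le {γ : Type*} [DecidableEq γ] (g : Multiset γ → Multiset γ → ℝ≥0∞) :
    (∑' I : Multiset γ, ∑ J ∈ I.powerset.toFinset, g J (I - J)) ≤
      ∑' J : Multiset γ, ∑' K : Multiset γ, g J K := by
  have h1 : ∀ I : Multiset γ, (∑ J ∈ I.powerset.toFinset, g J (I - J)) =
      ∑' J : {J : Multiset γ // J ∈ I.powerset.toFinset}, g J.1 (I - J.1) :=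
    fun I => (Finset.tsum_subtype _ _).symm
  simp_rw [h1]
  rw [← ENNReal.tsum_sigma' (f := fun q : (Σ I : Multiset γ,
    {J : Multiset γ // J ∈ I.powerset.toFinset}) => g q.2.1 (q.1 - q.2.1))]
  have hinj : Function.Injective (fun q : (Σ I : Multiset γ,
      {J : Multiset γ // J ∈ I.powerset.toFinset}) => (q.2.1, q.1 - q.2.1)) := by
    rintro ⟨I, J, hJ⟩ ⟨I', J', hJ'⟩ h
    simp only [Prod.mk.injEq] at h
    obtain ⟨h1', h2'⟩ := h
    have hle : J ≤ I := by
      simpa [Multiset.mem_powerset] using (Multiset.mem_toFinset.1 hJ)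
    have hle' : J' ≤ I' := by
      simpa [Multiset.mem_powerset] using (Multiset.mem_toFinset.1 hJ')
    have hI : I = I' := by
      have e1 : J + (I - J) = I := add_tsub_cancel_of_le hle
      have e2 : J' + (I' - J') = I' := add_tsub_cancel_of_le hle'
      rw [← e1, ← e2, h2', h1']
    subst hI
    have : J = J' := h1'
    subst this
    rfl
  calc (∑' q : (Σ I : Multiset γ, {J : Multiset γ // J ∈ I.powerset.toFinset}),
        g q.2.1 (q.1 - q.2.1))
      ≤ ∑' p : Multiset γ × Multiset γ, g p.1 p.2 :=
        ENNReal.tsum_comp_le_tsum_of_injective hinj (fun p => g p.1 p.2)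
    _ = ∑' J : Multiset γ, ∑' K : Multiset γ, g J K := ENNReal.tsum_prod'

lemma core_bound {Cw r ρC α : ℝ} (hCw : 0 < Cw) (hr : 0 < r) (hρ : 0 < ρC) (hα : 0 < α)
    (bl₁ bl₂ : β) (b₁ b₂ : Multiset (ℤ × β) → ℂ) :
    (∑' I : Multiset (ℤ × β), ENNReal.ofReal (hidaWeight Cw r I) *
        ENNReal.ofReal ρC ^ Multiset.card I *
      ∑' i : ℤ, ENNReal.ofReal ((Cw * (i : ℝ) ^ 2 + 1) ^ (α + 1)) *
        (∑ J ∈ I.powerset.toFinset,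
          (‖ann (i, bl₁) b₁ J‖₊ : ℝ≥0∞) * (‖ann (i, bl₂) b₂ (I - J)‖₊ : ℝ≥0∞)) ^ 2)
    ≤ 2 * ((ENNReal.ofReal (2 * ρC))⁻¹ * fockNormSq Cw (r + 2 * (α + 1)) (16 * ρC) b₁) *
        ((ENNReal.ofReal (2 * ρC))⁻¹ * fockNormSq Cw (r + 2 * (α + 1)) (16 * ρC) b₂) := by
  classical
  set W : ℤ → ℝ≥0∞ := fun i => ENNReal.ofReal ((Cw * (i : ℝ) ^ 2 + 1) ^ (α + 1)) with hWdef
  have hW1 : ∀ i, 1 ≤ W i := by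
    intro i
    rw [hWdef]
    exact ENNReal.one_le_ofReal.2 (one_le_rpow' (one_le_base hCw i) (by linarith))
  have h2ρ : ENNReal.ofReal (2 * ρC) = 2 * ENNReal.ofReal ρC := by
    rw [ENNReal.ofReal_mul (by norm_num : (0:ℝ) ≤ 2), ENNReal.ofReal_ofNat]
  set t : ℤ → Multiset (ℤ × β) → Multiset (ℤ × β) → ℝ≥0∞ := fun i J K =>
    (‖ann (i, bl₁) b₁ J‖₊ : ℝ≥0∞) * (‖ann (i, bl₂) b₂ K‖₊ : ℝ≥0∞) with ht
  set F₁ : Multiset (ℤ × β) → ℝ≥0∞ := fun J => ENNReal.ofReal (hidaWeight Cw r J) *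
    ENNReal.ofReal (2 * ρC) ^ Multiset.card J *
    ∑' i : ℤ, W i * ((‖ann (i, bl₁) b₁ J‖₊ : ℝ≥0∞)) ^ 2 with hF₁
  set F₂ : Multiset (ℤ × β) → ℝ≥0∞ := fun K => ENNReal.ofReal (hidaWeight Cw r K) *
    ENNReal.ofReal (2 * ρC) ^ Multiset.card K *
    ∑' i : ℤ, W i * ((‖ann (i, bl₂) b₂ K‖₊ : ℝ≥0∞)) ^ 2 with hF₂
  set g : Multiset (ℤ × β) → Multiset (ℤ × β) → ℝ≥0∞ := fun J K =>
    ENNReal.ofReal (hidaWeight Cw r (J + K)) *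
      ENNReal.ofReal (2 * ρC) ^ Multiset.card (J + K) *
      ∑' i : ℤ, W i * (t i J K) ^ 2 with hg
  -- step 1 : per I bound using finite Cauchy-Schwarz
  have step1 : ∀ I : Multiset (ℤ × β),
      ENNReal.ofReal (hidaWeight Cw r I) * ENNReal.ofReal ρC ^ Multiset.card I *
        (∑' i : ℤ, W i * (∑ J ∈ I.powerset.toFinset, t i J (I - J)) ^ 2) ≤
      2 * (∑ J ∈ I.powerset.toFinset, g J (I - J)) := by
    intro I
    have hcards : ((I.powerset.toFinset.card : ℕ) : ℝ≥0∞) ≤ 2 ^ Multiset.card I := by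
      calc ((I.powerset.toFinset.card : ℕ) : ℝ≥0∞) ≤ ((Multiset.card I.powerset : ℕ) : ℝ≥0∞) :=
            Nat.cast_le.2 (Multiset.toFinset_card_le _)
        _ = ((2 ^ Multiset.card I : ℕ) : ℝ≥0∞) := by rw [Multiset.card_powerset]
        _ = 2 ^ Multiset.card I := by push_cast; ring
    have hCS : ∀ i : ℤ, (∑ J ∈ I.powerset.toFinset, t i J (I - J)) ^ 2 ≤
        2 * 2 ^ Multiset.card I * ∑ J ∈ I.powerset.toFinset, (t i J (I - J)) ^ 2 := by
      intro i
      calc (∑ J ∈ I.powerset.toFinset, t i J (I - J)) ^ 2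
          ≤ (2 * I.powerset.toFinset.card) * ∑ J ∈ I.powerset.toFinset, (t i J (I - J)) ^ 2 :=
            finset_sq_le _ _
        _ ≤ 2 * 2 ^ Multiset.card I * ∑ J ∈ I.powerset.toFinset, (t i J (I - J)) ^ 2 := by
            gcongr
    calc ENNReal.ofReal (hidaWeight Cw r I) * ENNReal.ofReal ρC ^ Multiset.card I *
        (∑' i : ℤ, W i * (∑ J ∈ I.powerset.toFinset, t i J (I - J)) ^ 2)
        ≤ ENNReal.ofReal (hidaWeight Cw r I) * ENNReal.ofReal ρC ^ Multiset.card I *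
          (∑' i : ℤ, W i *
            (2 * 2 ^ Multiset.card I * ∑ J ∈ I.powerset.toFinset, (t i J (I - J)) ^ 2)) := by
          gcongr with i
          exact hCS i
      _ = 2 * (∑ J ∈ I.powerset.toFinset,
            ENNReal.ofReal (hidaWeight Cw r I) * ENNReal.ofReal (2 * ρC) ^ Multiset.card I *
            ∑' i : ℤ, W i * (t i J (I - J)) ^ 2) := by
          have hQ : (2:ℝ≥0∞) ^ Multiset.card I * ENNReal.ofReal ρC ^ Multiset.card I =
              ENNReal.ofReal (2 * ρC) ^ Multiset.card I := by
            rw [h2ρ, mul_pow]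
          have e1 : (∑' i : ℤ, W i * (2 * 2 ^ Multiset.card I *
              ∑ J ∈ I.powerset.toFinset, (t i J (I - J)) ^ 2)) =
              2 * 2 ^ Multiset.card I *
                ∑ J ∈ I.powerset.toFinset, ∑' i : ℤ, W i * (t i J (I - J)) ^ 2 := by
            rw [← Summable.tsum_finsetSum (fun J _ => ENNReal.summable), ← ENNReal.tsum_mul_left]
            refine tsum_congr fun i => ?_
            rw [← mul_assoc, mul_comm (W i) (2 * 2 ^ Multiset.card I), mul_assoc,
              Finset.mul_sum]
          rw [e1, ← Finset.mul_sum, ← hQ]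
          ring
      _ = 2 * (∑ J ∈ I.powerset.toFinset, g J (I - J)) := by
          congr 1
          refine Finset.sum_congr rfl fun J hJ => ?_
          have hle : J ≤ I := by
            simpa [Multiset.mem_powerset] using (Multiset.mem_toFinset.1 hJ)
          rw [hg]
          simp only
          rw [add_tsub_cancel_of_le hle]
  have hg_le : ∀ J K : Multiset (ℤ × β), g J K ≤ F₁ J * F₂ K := by
    intro J K
    have hsum_le : (∑' i : ℤ, W i * (t i J K) ^ 2) ≤
        (∑' i : ℤ, W i * ((‖ann (i, bl₁) b₁ J‖₊ : ℝ≥0∞)) ^ 2) *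
        (∑' i : ℤ, W i * ((‖ann (i, bl₂) b₂ K‖₊ : ℝ≥0∞)) ^ 2) := by
      calc (∑' i : ℤ, W i * (t i J K) ^ 2)
          ≤ ∑' i : ℤ, (W i * ((‖ann (i, bl₁) b₁ J‖₊ : ℝ≥0∞)) ^ 2) *
              (W i * ((‖ann (i, bl₂) b₂ K‖₊ : ℝ≥0∞)) ^ 2) := by
            refine Summable.tsum_le_tsum (fun i => ?_) ENNReal.summable ENNReal.summable
            rw [ht]
            simp only [mul_pow]
            calc W i * (((‖ann (i, bl₁) b₁ J‖₊ : ℝ≥0∞)) ^ 2 *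
                  ((‖ann (i, bl₂) b₂ K‖₊ : ℝ≥0∞)) ^ 2)
                ≤ (W i * W i) * (((‖ann (i, bl₁) b₁ J‖₊ : ℝ≥0∞)) ^ 2 *
                  ((‖ann (i, bl₂) b₂ K‖₊ : ℝ≥0∞)) ^ 2) := by
                  apply mul_le_mul_left
                  nth_rewrite 1 [← one_mul (W i)]
                  exact mul_le_mul_left (hW1 i) _
              _ = (W i * ((‖ann (i, bl₁) b₁ J‖₊ : ℝ≥0∞)) ^ 2) *
                  (W i * ((‖ann (i, bl₂) b₂ K‖₊ : ℝ≥0∞)) ^ 2) := by ring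
        _ ≤ ∑' i : ℤ, (W i * ((‖ann (i, bl₁) b₁ J‖₊ : ℝ≥0∞)) ^ 2) *
              (∑' j : ℤ, W j * ((‖ann (j, bl₂) b₂ K‖₊ : ℝ≥0∞)) ^ 2) := by
            refine Summable.tsum_le_tsum (fun i => ?_) ENNReal.summable ENNReal.summable
            exact mul_le_mul_right (ENNReal.le_tsum i) _
        _ = _ := ENNReal.tsum_mul_right
    have hwadd : ENNReal.ofReal (hidaWeight Cw r (J + K)) =
        ENNReal.ofReal (hidaWeight Cw r J) * ENNReal.ofReal (hidaWeight Cw r K) := by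
      rw [hidaWeight_add, ENNReal.ofReal_mul (hidaWeight_nonneg hCw hr.le J)]
    calc g J K = (ENNReal.ofReal (hidaWeight Cw r J) * ENNReal.ofReal (hidaWeight Cw r K)) *
        (ENNReal.ofReal (2 * ρC) ^ Multiset.card J *
          ENNReal.ofReal (2 * ρC) ^ Multiset.card K) *
        ∑' i : ℤ, W i * (t i J K) ^ 2 := by
          rw [hg]
          simp only [hwadd, Multiset.card_add, pow_add]
      _ ≤ (ENNReal.ofReal (hidaWeight Cw r J) * ENNReal.ofReal (hidaWeight Cw r K)) *
        (ENNReal.ofReal (2 * ρC) ^ Multiset.card J *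
          ENNReal.ofReal (2 * ρC) ^ Multiset.card K) *
        ((∑' i : ℤ, W i * ((‖ann (i, bl₁) b₁ J‖₊ : ℝ≥0∞)) ^ 2) *
          (∑' i : ℤ, W i * ((‖ann (i, bl₂) b₂ K‖₊ : ℝ≥0∞)) ^ 2)) :=
          mul_le_mul_right hsum_le _
      _ = F₁ J * F₂ K := by rw [hF₁, hF₂]; ring
  have hPhi : ∀ (bl : β) (b : Multiset (ℤ × β) → ℂ),
      (∑' J : Multiset (ℤ × β), ENNReal.ofReal (hidaWeight Cw r J) *
        ENNReal.ofReal (2 * ρC) ^ Multiset.card J *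
        ∑' i : ℤ, W i * ((‖ann (i, bl) b J‖₊ : ℝ≥0∞)) ^ 2) ≤
      (ENNReal.ofReal (2 * ρC))⁻¹ * fockNormSq Cw (r + 2 * (α + 1)) (16 * ρC) b := by
    intro bl b
    have h16 : (8 : ℝ) * (2 * ρC) = 16 * ρC := by ring
    have := Phi_bound (ρ := 2 * ρC) hCw hr (by linarith) hα bl b
    rw [h16] at this
    refine le_trans ?_ this
    rw [ENNReal.tsum_comm]
    refine le_of_eq (tsum_congr fun J => ?_)
    rw [← ENNReal.tsum_mul_left]
    refine tsum_congr fun i => ?_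
    ring
  calc (∑' I : Multiset (ℤ × β), ENNReal.ofReal (hidaWeight Cw r I) *
        ENNReal.ofReal ρC ^ Multiset.card I *
      ∑' i : ℤ, ENNReal.ofReal ((Cw * (i : ℝ) ^ 2 + 1) ^ (α + 1)) *
        (∑ J ∈ I.powerset.toFinset,
          (‖ann (i, bl₁) b₁ J‖₊ : ℝ≥0∞) * (‖ann (i, bl₂) b₂ (I - J)‖₊ : ℝ≥0∞)) ^ 2)
      ≤ ∑' I : Multiset (ℤ × β), 2 * ∑ J ∈ I.powerset.toFinset, g J (I - J) :=
        Summable.tsum_le_tsum (fun I => step1 I) ENNReal.summable ENNReal.summable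
    _ = 2 * ∑' I : Multiset (ℤ × β), ∑ J ∈ I.powerset.toFinset, g J (I - J) :=
        ENNReal.tsum_mul_left
    _ ≤ 2 * ∑' J : Multiset (ℤ × β), ∑' K : Multiset (ℤ × β), g J K :=
        mul_le_mul_right (pairing_le g) 2
    _ ≤ 2 * ∑' J : Multiset (ℤ × β), ∑' K : Multiset (ℤ × β), F₁ J * F₂ K := by
        apply mul_le_mul_right
        exact Summable.tsum_le_tsum (fun J => Summable.tsum_le_tsum (fun K => hg_le J K)
          ENNReal.summable ENNReal.summable) ENNReal.summable ENNReal.summable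
    _ = 2 * ((∑' J : Multiset (ℤ × β), F₁ J) * (∑' K : Multiset (ℤ × β), F₂ K)) := by
        congr 1
        rw [← ENNReal.tsum_mul_right]
        exact tsum_congr fun J => ENNReal.tsum_mul_left
    _ ≤ 2 * (((ENNReal.ofReal (2 * ρC))⁻¹ * fockNormSq Cw (r + 2 * (α + 1)) (16 * ρC) b₁) *
        ((ENNReal.ofReal (2 * ρC))⁻¹ * fockNormSq Cw (r + 2 * (α + 1)) (16 * ρC) b₂)) := by
        apply mul_le_mul_right
        exact mul_le_mul' (hPhi bl₁ b₁) (hPhi bl₂ b₂)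
    _ = _ := by ring


lemma ennnorm_tsum_le {ι : Type*} (f : ι → ℂ) :
    (‖∑' i, f i‖₊ : ℝ≥0∞) ≤ ∑' i, (‖f i‖₊ : ℝ≥0∞) := by
  by_cases h : Summable (fun i => ‖f i‖₊)
  · have h2 : Summable f := Summable.of_nnnorm h
    calc (‖∑' i, f i‖₊ : ℝ≥0∞) ≤ (↑(∑' i, ‖f i‖₊) : ℝ≥0∞) :=
          ENNReal.coe_le_coe.2 (nnnorm_tsum_le h)
      _ = ∑' i, (‖f i‖₊ : ℝ≥0∞) := ENNReal.coe_tsum h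
  · have h3 : (∑' i, (‖f i‖₊ : ℝ≥0∞)) = ⊤ := by
      by_contra hne
      exact h (ENNReal.tsum_coe_ne_top_iff_summable.1 hne)
    rw [h3]; exact le_top

lemma tsum_sq_le {ι : Type*} (u e : ι → ℝ≥0∞) (he0 : ∀ i, e i ≠ 0) (het : ∀ i, e i ≠ ⊤) :
    (∑' i, u i) ^ 2 ≤ 2 * (∑' i, e i) * ∑' i, (e i)⁻¹ * (u i) ^ 2 := by
  have expand : (∑' i, u i) ^ 2 = ∑' i, ∑' j, u i * u j := by
    rw [sq]
    rw [← ENNReal.tsum_mul_right]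
    exact tsum_congr fun i => (ENNReal.tsum_mul_left).symm
  rw [expand]
  have step : ∀ i j, u i * u j ≤ (e j * (e i)⁻¹) * (u i) ^ 2 + (e i * (e j)⁻¹) * (u j) ^ 2 := by
    intro i j
    have hc0 : e j * (e i)⁻¹ ≠ 0 := by
      simp [he0 j, het i]
    have hct : e j * (e i)⁻¹ ≠ ⊤ := by
      simp [ENNReal.mul_ne_top, het j, he0 i]
    have hinv : (e j * (e i)⁻¹)⁻¹ = e i * (e j)⁻¹ := by
      rw [ENNReal.mul_inv (Or.inl (he0 j)) (Or.inl (het j)), inv_inv, mul_comm]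
    calc u i * u j ≤ (e j * (e i)⁻¹) * (u i) ^ 2 + (e j * (e i)⁻¹)⁻¹ * (u j) ^ 2 :=
          amgm hc0 hct
      _ = _ := by rw [hinv]
  calc ∑' i, ∑' j, u i * u j
      ≤ ∑' i, ∑' j, ((e j * (e i)⁻¹) * (u i) ^ 2 + (e i * (e j)⁻¹) * (u j) ^ 2) :=
        Summable.tsum_le_tsum (fun i => Summable.tsum_le_tsum (fun j => step i j) ENNReal.summable ENNReal.summable)
          ENNReal.summable ENNReal.summable
    _ = (∑' i, ∑' j, (e j * (e i)⁻¹) * (u i) ^ 2) + ∑' i, ∑' j, (e i * (e j)⁻¹) * (u j) ^ 2 := by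
        rw [← ENNReal.tsum_add]
        exact tsum_congr fun i => ENNReal.tsum_add
    _ = (∑' j, e j) * (∑' i, (e i)⁻¹ * (u i) ^ 2) + (∑' i, e i) * (∑' j, (e j)⁻¹ * (u j) ^ 2) := by
        congr 1
        · rw [← ENNReal.tsum_mul_left]
          exact tsum_congr fun i => by
            rw [← ENNReal.tsum_mul_right]
            exact tsum_congr fun j => by ring
        · calc ∑' i, ∑' j, (e i * (e j)⁻¹) * (u j) ^ 2
              = ∑' j, ∑' i, (e i * (e j)⁻¹) * (u j) ^ 2 := ENNReal.tsum_comm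
            _ = ∑' j, (∑' i, e i) * ((e j)⁻¹ * (u j) ^ 2) := tsum_congr fun j => by
                  rw [← ENNReal.tsum_mul_right]; exact tsum_congr fun i => by ring
            _ = (∑' i, e i) * ∑' j, (e j)⁻¹ * (u j) ^ 2 := ENNReal.tsum_mul_left
    _ = 2 * (∑' i, e i) * ∑' i, (e i)⁻¹ * (u i) ^ 2 := by ring

lemma summable_inv_base {C₁ : ℝ} (hC₁ : 0 < C₁) :
    Summable (fun i : ℤ => (C₁ * (i : ℝ) ^ 2 + 1)⁻¹) := by
  have hnat : Summable (fun n : ℕ => (C₁ * (n : ℝ) ^ 2 + 1)⁻¹) := by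
    rw [← summable_nat_add_iff 1]
    have hbase : Summable (fun n : ℕ => C₁⁻¹ * ((n + 1 : ℝ) ^ 2)⁻¹) := by
      apply Summable.mul_left
      have h0 : Summable (fun n : ℕ => (((n : ℝ)) ^ 2)⁻¹) :=
        Real.summable_nat_pow_inv.2 one_lt_two
      have := (summable_nat_add_iff (f := fun n : ℕ => (((n : ℝ)) ^ 2)⁻¹) 1).2 h0
      apply this.congr
      intro n
      push_cast
      ring_nf
    apply Summable.of_nonneg_of_le _ _ hbase
    · intro n; positivity
    · intro n
      push_cast
      rw [← mul_inv]
      apply inv_anti₀ (by positivity)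
      linarith
  apply Summable.of_nat_of_neg hnat
  apply hnat.congr
  intro n
  push_cast
  ring_nf

lemma eig_key {C₁ C α : ℝ} (hC₁ : 0 < C₁) (hC : 0 < C) (hα : 0 < α)
    {lam : ℤ → ℝ} (hlam : ∀ i : ℤ, |lam i| ≤ C * |(i : ℝ)| ^ α) (i : ℤ) :
    (C₁ * (i : ℝ) ^ 2 + 1) * (lam i) ^ 2 ≤
      (C ^ 2 / C₁ ^ α) * (C₁ * (i : ℝ) ^ 2 + 1) ^ (α + 1) := by
  have hb := one_le_base hC₁ i
  have hb0 : (0:ℝ) < C₁ * (i : ℝ) ^ 2 + 1 := by linarith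
  have step1 : (lam i) ^ 2 ≤ C ^ 2 * (|(i:ℝ)| ^ α) ^ 2 := by
    have h := hlam i
    have h0 : (0:ℝ) ≤ |lam i| := abs_nonneg _
    calc (lam i) ^ 2 = |lam i| ^ 2 := (sq_abs _).symm
      _ ≤ (C * |(i:ℝ)| ^ α) ^ 2 := by
          apply pow_le_pow_left₀ h0 h
      _ = C ^ 2 * (|(i:ℝ)| ^ α) ^ 2 := by ring
  have step2 : (|(i:ℝ)| ^ α) ^ 2 = ((i:ℝ) ^ 2) ^ α := by
    rw [← Real.rpow_natCast (|(i:ℝ)| ^ α) 2, ← Real.rpow_mul (abs_nonneg _), ← sq_abs (i:ℝ),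
      ← Real.rpow_natCast |(i:ℝ)| 2, ← Real.rpow_mul (abs_nonneg _)]
    norm_num [mul_comm]
  have step3 : ((i:ℝ) ^ 2) ^ α ≤ ((C₁ * (i:ℝ) ^ 2 + 1) / C₁) ^ α := by
    apply Real.rpow_le_rpow (sq_nonneg _) _ hα.le
    rw [le_div_iff₀ hC₁]
    nlinarith
  have step4 : ((C₁ * (i:ℝ) ^ 2 + 1) / C₁) ^ α = (C₁ * (i:ℝ) ^ 2 + 1) ^ α / C₁ ^ α :=
    Real.div_rpow hb0.le hC₁.le α
  calc (C₁ * (i : ℝ) ^ 2 + 1) * (lam i) ^ 2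
      ≤ (C₁ * (i : ℝ) ^ 2 + 1) * (C ^ 2 * ((C₁ * (i:ℝ) ^ 2 + 1) ^ α / C₁ ^ α)) := by
        apply mul_le_mul_of_nonneg_left _ hb0.le
        calc (lam i) ^ 2 ≤ C ^ 2 * (|(i:ℝ)| ^ α) ^ 2 := step1
          _ = C ^ 2 * ((i:ℝ) ^ 2) ^ α := by rw [step2]
          _ ≤ C ^ 2 * ((C₁ * (i:ℝ) ^ 2 + 1) ^ α / C₁ ^ α) := by
              rw [← step4]; exact mul_le_mul_of_nonneg_left step3 (by positivity)
    _ = (C ^ 2 / C₁ ^ α) * ((C₁ * (i:ℝ) ^ 2 + 1) ^ α * (C₁ * (i:ℝ) ^ 2 + 1)) := by ring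
    _ = (C ^ 2 / C₁ ^ α) * (C₁ * (i:ℝ) ^ 2 + 1) ^ (α + 1) := by
        rw [Real.rpow_add_one hb0.ne']

end EAaux

/-- If the eigenvalues `λ_i` of the diagonal operator `A` grow at most polynomially,
`|λ_i| ≤ C|i|^α`, then `E_A` is continuous from `W·N_{∞−} × W·N_{∞−}` to `W·N_{∞−}`:
for all `r, C'` there are `r₁, C₁'` and `K` with
`‖E_A[F₁,F₂]‖_{r,C'} ≤ K ‖F₁‖_{r₁,C₁'} ‖F₂‖_{r₁,C₁'}`. -/
theorem EA_continuous (Cw : ℝ) (hCw : 0 < Cw) (lam : ℤ → ℝ) (C α : ℝ)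
    (hC : 0 < C) (hα : 0 < α) (hlam : ∀ i : ℤ, |lam i| ≤ C * |(i : ℝ)| ^ α) :
    ∀ r C' : ℝ, 0 < r → 0 < C' → ∃ r₁ C₁' : ℝ, ∃ K : ℝ≥0∞, 0 < r₁ ∧ 0 < C₁' ∧
      0 < K ∧ K < ⊤ ∧
      ∀ b₁ b₂ : Multiset PairIdx → ℂ, memHida Cw b₁ → memHida Cw b₂ →
        fockNorm Cw r C' (EA lam b₁ b₂) ≤
          K * fockNorm Cw r₁ C₁' b₁ * fockNorm Cw r₁ C₁' b₂ := by
  intro r C' hr hC'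
  classical
  have hbase_pos : ∀ i : ℤ, (0:ℝ) < Cw * (i:ℝ) ^ 2 + 1 := fun i => by nlinarith [sq_nonneg ((i:ℝ))]
  set E : ℤ → ℝ≥0∞ := fun i => (ENNReal.ofReal (Cw * (i:ℝ) ^ 2 + 1))⁻¹ with hEdef
  have hE0 : ∀ i, E i ≠ 0 := fun i => by
    simp [hEdef, ENNReal.inv_ne_zero, ENNReal.ofReal_ne_top]
  have hEt : ∀ i, E i ≠ ⊤ := fun i => by
    simp [hEdef, ENNReal.inv_ne_top, ENNReal.ofReal_eq_zero, not_le, hbase_pos i]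
  set S : ℝ≥0∞ := ∑' i : ℤ, E i with hSdef
  have hS_top : S ≠ ⊤ := by
    have hsum := summable_inv_base hCw
    have heq : S = ENNReal.ofReal (∑' i : ℤ, (Cw * (i:ℝ) ^ 2 + 1)⁻¹) := by
      rw [ENNReal.ofReal_tsum_of_nonneg (fun i => by positivity) hsum]
      exact tsum_congr fun i => (ENNReal.ofReal_inv_of_pos (hbase_pos i)).symm
    rw [heq]; exact ENNReal.ofReal_ne_top
  have hS_pos : 0 < S := by
    have hE0eq : E 0 = 1 := by norm_num [hEdef]
    have h1 : (1:ℝ≥0∞) ≤ S := by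
      calc (1:ℝ≥0∞) = E 0 := hE0eq.symm
        _ ≤ S := ENNReal.le_tsum 0
    exact lt_of_lt_of_le zero_lt_one h1
  set C₂ : ℝ≥0∞ := ENNReal.ofReal (C ^ 2 / Cw ^ α) with hC₂def
  have hC₂0 : C₂ ≠ 0 := by
    have : (0:ℝ) < C ^ 2 / Cw ^ α := by positivity
    simp [hC₂def, ENNReal.ofReal_eq_zero, not_le, this]
  have hC₂t : C₂ ≠ ⊤ := ENNReal.ofReal_ne_top
  have h2C'pos : (0:ℝ) < 2 * C' := by linarith
  have hinv0 : (ENNReal.ofReal (2 * C'))⁻¹ ≠ 0 := by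
    exact ENNReal.inv_ne_zero.2 ENNReal.ofReal_ne_top
  have hinvt : (ENNReal.ofReal (2 * C'))⁻¹ ≠ ⊤ := by
    simp [ENNReal.inv_ne_top, ENNReal.ofReal_eq_zero, not_le, h2C'pos, hC']
  set K₅ : ℝ≥0∞ := 24 * S * C₂ * ((ENNReal.ofReal (2 * C'))⁻¹) ^ 2 with hK₅def
  have hK₅0 : K₅ ≠ 0 :=
    mul_ne_zero (mul_ne_zero (mul_ne_zero (by norm_num) hS_pos.ne') hC₂0) (pow_ne_zero 2 hinv0)
  have hK₅t : K₅ ≠ ⊤ := by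
    apply ENNReal.mul_ne_top
    apply ENNReal.mul_ne_top
    apply ENNReal.mul_ne_top
    · exact ENNReal.ofNat_ne_top
    · exact hS_top
    · exact hC₂t
    · exact ENNReal.pow_ne_top hinvt
  refine ⟨r + 2 * (α + 1), 16 * C', K₅ ^ (1/2 : ℝ), by linarith, by linarith,
    ENNReal.rpow_pos (zero_lt_iff.2 hK₅0) hK₅t,
    ENNReal.rpow_lt_top_of_nonneg (by norm_num) hK₅t, ?_⟩
  intro b₁ b₂ _ _
  -- pointwise bound on the squared norm of `EA`
  have hasq : ∀ I : Multiset PairIdx, (‖EA lam b₁ b₂ I‖₊ : ℝ≥0∞) ^ 2 ≤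
      6 * S * C₂ *
        ((∑' i : ℤ, ENNReal.ofReal ((Cw * (i:ℝ) ^ 2 + 1) ^ (α + 1)) *
          (∑ J ∈ I.powerset.toFinset,
            (‖ann (i, false) b₁ J‖₊ : ℝ≥0∞) * (‖ann (i, true) b₂ (I - J)‖₊ : ℝ≥0∞)) ^ 2) +
         (∑' i : ℤ, ENNReal.ofReal ((Cw * (i:ℝ) ^ 2 + 1) ^ (α + 1)) *
          (∑ J ∈ I.powerset.toFinset,
            (‖ann (i, false) b₂ J‖₊ : ℝ≥0∞) * (‖ann (i, true) b₁ (I - J)‖₊ : ℝ≥0∞)) ^ 2)) := by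
    intro I
    set X : ℤ → ℝ≥0∞ := fun i => ∑ J ∈ I.powerset.toFinset,
      (‖ann (i, false) b₁ J‖₊ : ℝ≥0∞) * (‖ann (i, true) b₂ (I - J)‖₊ : ℝ≥0∞) with hXdef
    set Y : ℤ → ℝ≥0∞ := fun i => ∑ J ∈ I.powerset.toFinset,
      (‖ann (i, false) b₂ J‖₊ : ℝ≥0∞) * (‖ann (i, true) b₁ (I - J)‖₊ : ℝ≥0∞) with hYdef
    set W : ℤ → ℝ≥0∞ := fun i => ENNReal.ofReal ((Cw * (i:ℝ) ^ 2 + 1) ^ (α + 1)) with hWdef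
    have hbound : ∀ (i : ℤ) (c₁ c₂ : Multiset PairIdx → ℂ),
        (‖∑ J ∈ I.powerset.toFinset, ann (i, false) c₁ J * ann (i, true) c₂ (I - J)‖₊ : ℝ≥0∞) ≤
        ∑ J ∈ I.powerset.toFinset,
          (‖ann (i, false) c₁ J‖₊ : ℝ≥0∞) * (‖ann (i, true) c₂ (I - J)‖₊ : ℝ≥0∞) := by
      intro i c₁ c₂
      calc (‖∑ J ∈ I.powerset.toFinset, ann (i, false) c₁ J * ann (i, true) c₂ (I - J)‖₊ : ℝ≥0∞)
          ≤ (↑(∑ J ∈ I.powerset.toFinset, ‖ann (i, false) c₁ J * ann (i, true) c₂ (I - J)‖₊) :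
              ℝ≥0∞) := ENNReal.coe_le_coe.2 (nnnorm_sum_le _ _)
        _ = ∑ J ∈ I.powerset.toFinset,
            (‖ann (i, false) c₁ J‖₊ : ℝ≥0∞) * (‖ann (i, true) c₂ (I - J)‖₊ : ℝ≥0∞) := by
            rw [ENNReal.coe_finset_sum]
            exact Finset.sum_congr rfl fun J _ => by rw [nnnorm_mul, ENNReal.coe_mul]
    have a1 : (‖EA lam b₁ b₂ I‖₊ : ℝ≥0∞) ≤
        ∑' i : ℤ, ENNReal.ofReal |lam i| * (X i + Y i) := by
      rw [EA]
      refine le_trans (ennnorm_tsum_le _) ?_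
      refine Summable.tsum_le_tsum (fun i => ?_) ENNReal.summable ENNReal.summable
      rw [nnnorm_mul, ENNReal.coe_mul, Complex.nnnorm_real, ← enorm_eq_nnnorm, Real.enorm_eq_ofReal_abs]
      apply mul_le_mul_right
      calc (‖(∑ J ∈ I.powerset.toFinset, ann (i, false) b₁ J * ann (i, true) b₂ (I - J)) +
              ∑ J ∈ I.powerset.toFinset, ann (i, false) b₂ J * ann (i, true) b₁ (I - J)‖₊ :
              ℝ≥0∞)
          ≤ (‖∑ J ∈ I.powerset.toFinset, ann (i, false) b₁ J * ann (i, true) b₂ (I - J)‖₊ :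
              ℝ≥0∞) +
            (‖∑ J ∈ I.powerset.toFinset, ann (i, false) b₂ J * ann (i, true) b₁ (I - J)‖₊ :
              ℝ≥0∞) := by
            exact_mod_cast nnnorm_add_le _ _
        _ ≤ X i + Y i := add_le_add (hbound i b₁ b₂) (hbound i b₂ b₁)
    have a3 : ∀ i : ℤ, (E i)⁻¹ * (ENNReal.ofReal |lam i| * (X i + Y i)) ^ 2 ≤
        3 * C₂ * (W i * (X i) ^ 2 + W i * (Y i) ^ 2) := by
      intro i
      have hEinv : (E i)⁻¹ = ENNReal.ofReal (Cw * (i:ℝ) ^ 2 + 1) := by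
        rw [hEdef]; exact inv_inv _
      have hcoeff : ENNReal.ofReal (Cw * (i:ℝ) ^ 2 + 1) * (ENNReal.ofReal |lam i|) ^ 2 ≤
          C₂ * W i := by
        rw [← ENNReal.ofReal_pow (abs_nonneg _), sq_abs,
          ← ENNReal.ofReal_mul (hbase_pos i).le, hC₂def, hWdef]
        simp only
        rw [← ENNReal.ofReal_mul (by positivity)]
        exact ENNReal.ofReal_le_ofReal (eig_key hCw hC hα hlam i)
      have hxy : X i * Y i ≤ (X i) ^ 2 + (Y i) ^ 2 := by
        simpa using amgm (a := X i) (b := Y i) one_ne_zero ENNReal.one_ne_top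
      have hXY : (X i + Y i) ^ 2 ≤ 3 * ((X i) ^ 2 + (Y i) ^ 2) := by
        calc (X i + Y i) ^ 2
            = (X i) ^ 2 + X i * Y i + (X i * Y i + (Y i) ^ 2) := by ring
          _ ≤ (X i) ^ 2 + ((X i) ^ 2 + (Y i) ^ 2) +
              (((X i) ^ 2 + (Y i) ^ 2) + (Y i) ^ 2) := by gcongr
          _ = 3 * ((X i) ^ 2 + (Y i) ^ 2) := by ring
      calc (E i)⁻¹ * (ENNReal.ofReal |lam i| * (X i + Y i)) ^ 2
          = (ENNReal.ofReal (Cw * (i:ℝ) ^ 2 + 1) * (ENNReal.ofReal |lam i|) ^ 2) *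
            (X i + Y i) ^ 2 := by rw [hEinv, mul_pow]; ring
        _ ≤ (C₂ * W i) * (3 * ((X i) ^ 2 + (Y i) ^ 2)) := mul_le_mul' hcoeff hXY
        _ = 3 * C₂ * (W i * (X i) ^ 2 + W i * (Y i) ^ 2) := by ring
    calc (‖EA lam b₁ b₂ I‖₊ : ℝ≥0∞) ^ 2
        ≤ (∑' i : ℤ, ENNReal.ofReal |lam i| * (X i + Y i)) ^ 2 := by
          exact pow_le_pow_left₀ (by positivity) a1 2
      _ ≤ 2 * S * ∑' i : ℤ, (E i)⁻¹ * (ENNReal.ofReal |lam i| * (X i + Y i)) ^ 2 := by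
          rw [hSdef]
          exact tsum_sq_le _ E hE0 hEt
      _ ≤ 2 * S * ∑' i : ℤ, 3 * C₂ * (W i * (X i) ^ 2 + W i * (Y i) ^ 2) :=
          mul_le_mul_right (Summable.tsum_le_tsum (fun i => a3 i) ENNReal.summable ENNReal.summable) _
      _ = 6 * S * C₂ * ((∑' i : ℤ, W i * (X i) ^ 2) + ∑' i : ℤ, W i * (Y i) ^ 2) := by
          rw [ENNReal.tsum_mul_left, ENNReal.tsum_add]
          ring
  -- squared-norm inequality
  have hsq : fockNormSq Cw r C' (EA lam b₁ b₂) ≤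
      K₅ * fockNormSq Cw (r + 2 * (α + 1)) (16 * C') b₁ *
        fockNormSq Cw (r + 2 * (α + 1)) (16 * C') b₂ := by
    have hcore₁ := core_bound (ρC := C') hCw hr hC' hα false true b₁ b₂
    have hcore₂ := core_bound (ρC := C') hCw hr hC' hα false true b₂ b₁
    calc fockNormSq Cw r C' (EA lam b₁ b₂)
        ≤ ∑' I : Multiset PairIdx, (6 * S * C₂ *
            ((∑' i : ℤ, ENNReal.ofReal ((Cw * (i:ℝ) ^ 2 + 1) ^ (α + 1)) *
              (∑ J ∈ I.powerset.toFinset,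
                (‖ann (i, false) b₁ J‖₊ : ℝ≥0∞) * (‖ann (i, true) b₂ (I - J)‖₊ : ℝ≥0∞)) ^ 2) +
             (∑' i : ℤ, ENNReal.ofReal ((Cw * (i:ℝ) ^ 2 + 1) ^ (α + 1)) *
              (∑ J ∈ I.powerset.toFinset,
                (‖ann (i, false) b₂ J‖₊ : ℝ≥0∞) * (‖ann (i, true) b₁ (I - J)‖₊ : ℝ≥0∞)) ^ 2))) *
            ENNReal.ofReal (hidaWeight Cw r I) * ENNReal.ofReal C' ^ Multiset.card I := by
          rw [fockNormSq]
          refine Summable.tsum_le_tsum (fun I => ?_) ENNReal.summable ENNReal.summable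
          exact mul_le_mul_left (mul_le_mul_left (hasq I) _) _
      _ = 6 * S * C₂ *
          ((∑' I : Multiset PairIdx, ENNReal.ofReal (hidaWeight Cw r I) *
              ENNReal.ofReal C' ^ Multiset.card I *
            ∑' i : ℤ, ENNReal.ofReal ((Cw * (i:ℝ) ^ 2 + 1) ^ (α + 1)) *
              (∑ J ∈ I.powerset.toFinset,
                (‖ann (i, false) b₁ J‖₊ : ℝ≥0∞) * (‖ann (i, true) b₂ (I - J)‖₊ : ℝ≥0∞)) ^ 2) +
           (∑' I : Multiset PairIdx, ENNReal.ofReal (hidaWeight Cw r I) *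
              ENNReal.ofReal C' ^ Multiset.card I *
            ∑' i : ℤ, ENNReal.ofReal ((Cw * (i:ℝ) ^ 2 + 1) ^ (α + 1)) *
              (∑ J ∈ I.powerset.toFinset,
                (‖ann (i, false) b₂ J‖₊ : ℝ≥0∞) * (‖ann (i, true) b₁ (I - J)‖₊ : ℝ≥0∞)) ^ 2)) := by
          calc ∑' I : Multiset PairIdx, (6 * S * C₂ *
              ((∑' i : ℤ, ENNReal.ofReal ((Cw * (i:ℝ) ^ 2 + 1) ^ (α + 1)) *
                (∑ J ∈ I.powerset.toFinset,
                  (‖ann (i, false) b₁ J‖₊ : ℝ≥0∞) * (‖ann (i, true) b₂ (I - J)‖₊ : ℝ≥0∞)) ^ 2) +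
               (∑' i : ℤ, ENNReal.ofReal ((Cw * (i:ℝ) ^ 2 + 1) ^ (α + 1)) *
                (∑ J ∈ I.powerset.toFinset,
                  (‖ann (i, false) b₂ J‖₊ : ℝ≥0∞) * (‖ann (i, true) b₁ (I - J)‖₊ : ℝ≥0∞)) ^ 2))) *
              ENNReal.ofReal (hidaWeight Cw r I) * ENNReal.ofReal C' ^ Multiset.card I
              = ∑' I : Multiset PairIdx,
                (6 * S * C₂ * (ENNReal.ofReal (hidaWeight Cw r I) *
                  ENNReal.ofReal C' ^ Multiset.card I *
                  ∑' i : ℤ, ENNReal.ofReal ((Cw * (i:ℝ) ^ 2 + 1) ^ (α + 1)) *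
                    (∑ J ∈ I.powerset.toFinset,
                      (‖ann (i, false) b₁ J‖₊ : ℝ≥0∞) * (‖ann (i, true) b₂ (I - J)‖₊ : ℝ≥0∞)) ^ 2) +
                 6 * S * C₂ * (ENNReal.ofReal (hidaWeight Cw r I) *
                  ENNReal.ofReal C' ^ Multiset.card I *
                  ∑' i : ℤ, ENNReal.ofReal ((Cw * (i:ℝ) ^ 2 + 1) ^ (α + 1)) *
                    (∑ J ∈ I.powerset.toFinset,
                      (‖ann (i, false) b₂ J‖₊ : ℝ≥0∞) * (‖ann (i, true) b₁ (I - J)‖₊ : ℝ≥0∞)) ^ 2)) :=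
                tsum_congr fun I => by ring
            _ = (∑' I : Multiset PairIdx,
                6 * S * C₂ * (ENNReal.ofReal (hidaWeight Cw r I) *
                  ENNReal.ofReal C' ^ Multiset.card I *
                  ∑' i : ℤ, ENNReal.ofReal ((Cw * (i:ℝ) ^ 2 + 1) ^ (α + 1)) *
                    (∑ J ∈ I.powerset.toFinset,
                      (‖ann (i, false) b₁ J‖₊ : ℝ≥0∞) * (‖ann (i, true) b₂ (I - J)‖₊ : ℝ≥0∞)) ^ 2)) +
                ∑' I : Multiset PairIdx,
                6 * S * C₂ * (ENNReal.ofReal (hidaWeight Cw r I) *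
                  ENNReal.ofReal C' ^ Multiset.card I *
                  ∑' i : ℤ, ENNReal.ofReal ((Cw * (i:ℝ) ^ 2 + 1) ^ (α + 1)) *
                    (∑ J ∈ I.powerset.toFinset,
                      (‖ann (i, false) b₂ J‖₊ : ℝ≥0∞) * (‖ann (i, true) b₁ (I - J)‖₊ : ℝ≥0∞)) ^ 2) :=
                ENNReal.tsum_add
            _ = _ := by
                rw [ENNReal.tsum_mul_left (a := 6 * S * C₂), ENNReal.tsum_mul_left (a := 6 * S * C₂),
                  mul_add]
      _ ≤ 6 * S * C₂ *
          ((2 * ((ENNReal.ofReal (2 * C'))⁻¹ * fockNormSq Cw (r + 2 * (α + 1)) (16 * C') b₁) *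
              ((ENNReal.ofReal (2 * C'))⁻¹ * fockNormSq Cw (r + 2 * (α + 1)) (16 * C') b₂)) +
           (2 * ((ENNReal.ofReal (2 * C'))⁻¹ * fockNormSq Cw (r + 2 * (α + 1)) (16 * C') b₂) *
              ((ENNReal.ofReal (2 * C'))⁻¹ * fockNormSq Cw (r + 2 * (α + 1)) (16 * C') b₁))) := by
          exact mul_le_mul_right (add_le_add hcore₁ hcore₂) _
      _ = K₅ * fockNormSq Cw (r + 2 * (α + 1)) (16 * C') b₁ *
            fockNormSq Cw (r + 2 * (α + 1)) (16 * C') b₂ := by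
          rw [hK₅def]
          ring
  rw [fockNorm, fockNorm, fockNorm]
  calc fockNormSq Cw r C' (EA lam b₁ b₂) ^ (1/2 : ℝ)
      ≤ (K₅ * fockNormSq Cw (r + 2 * (α + 1)) (16 * C') b₁ *
          fockNormSq Cw (r + 2 * (α + 1)) (16 * C') b₂) ^ (1/2 : ℝ) :=
        ENNReal.rpow_le_rpow hsq (by norm_num)
    _ = K₅ ^ (1/2 : ℝ) * fockNormSq Cw (r + 2 * (α + 1)) (16 * C') b₁ ^ (1/2 : ℝ) *
          fockNormSq Cw (r + 2 * (α + 1)) (16 * C') b₂ ^ (1/2 : ℝ) := by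
        rw [ENNReal.mul_rpow_of_nonneg _ _ (by norm_num : (0:ℝ) ≤ 1/2),
          ENNReal.mul_rpow_of_nonneg _ _ (by norm_num : (0:ℝ) ≤ 1/2)]
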